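/- For every a ∈ (0,1) and every p ≥ 1/(1−a), the map f_a does not belong to W^{1,p}: there is no g ∈ L^p([0,1]) with f_a(x) = ∫_0^x g(t) dt for all x ∈ [0,1]. -/

import Mathlib

open Set MeasureTheory

/-- The piecewise-affine `b`-branched sawtooth map on `[0,1]`:
`g1 b x = b*x - k` on `[k/b,(k+1)/b]` for `k ∈ {0,…,b-1}` even, and
`g1 b x = (k+1) - b*x` there for `k` odd.  (For `x ∈ [0,1]`, the index
`k = min ⌊b*x⌋ (b-1)` is exactly the branch index; at common endpoints of two
branches both formulas agree, so this agrees with the piecewise definition.) -/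
noncomputable def g1 (b : ℕ) (x : ℝ) : ℝ :=
  let k : ℤ := min ⌊(b : ℝ) * x⌋ ((b : ℤ) - 1)
  if Even k then (b : ℝ) * x - (k : ℝ) else ((k : ℝ) + 1) - (b : ℝ) * x

/-- `g_{a,b} = q_a ∘ g_{1,b} ∘ q_a⁻¹`, where `q_a x = x ^ a` (real power). -/
noncomputable def gab (a : ℝ) (b : ℕ) (x : ℝ) : ℝ := (g1 b (x ^ a⁻¹)) ^ a

/-- For `x ∈ I_n = (2^{-n}, 2^{-n+1}]` (with `n ≥ 1`), `nIdx x = n`. -/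
noncomputable def nIdx (x : ℝ) : ℕ := (⌊Real.logb 2 x⁻¹⌋ + 1).toNat

/-- The map `f_a : [0,1] → [0,1]`: on each interval `I_n = (2^{-n}, 2^{-n+1}]` it is
`A_n⁻¹ ∘ g_{a,2n+1} ∘ A_n`, where `A_n x = 2^n x - 1`, and `f_a 0 = 0`. -/
noncomputable def fa (a : ℝ) (x : ℝ) : ℝ :=
  if x ≤ 0 then 0
  else (gab a (2 * nIdx x + 1) ((2 : ℝ) ^ nIdx x * x - 1) + 1) / (2 : ℝ) ^ nIdx x

open scoped ENNReal NNReal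

noncomputable def uu (k : ℕ) : ℝ := (2 + (2:ℝ) ^ (-(k:ℝ))) / 3

noncomputable def xx (a : ℝ) (k : ℕ) : ℝ := (1 + uu k ^ a) / 2

lemma uu_pos_lt (k : ℕ) : 2/3 < uu k ∧ uu k ≤ 1 := by
  have h1 : (0:ℝ) < (2:ℝ) ^ (-(k:ℝ)) := Real.rpow_pos_of_pos (by norm_num) _
  have h2 : (2:ℝ) ^ (-(k:ℝ)) ≤ 1 := by
    apply Real.rpow_le_one_of_one_le_of_nonpos (by norm_num)
    simp
  constructor <;> unfold uu <;> nlinarith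

lemma uu_mem (k : ℕ) : uu k ∈ Ioc (2/3 : ℝ) 1 := ⟨(uu_pos_lt k).1, (uu_pos_lt k).2⟩

lemma uu_anti (k : ℕ) : uu (k+1) < uu k := by
  have : (2:ℝ) ^ (-((k:ℝ)+1)) < 2 ^ (-(k:ℝ)) := by
    apply Real.rpow_lt_rpow_of_exponent_lt (by norm_num); linarith
  unfold uu; push_cast; linarith

lemma nIdx_eq_one {x : ℝ} (hx : x ∈ Ioc (1/2 : ℝ) 1) : nIdx x = 1 := by
  obtain ⟨h1, h2⟩ := hx
  have hx0 : (0:ℝ) < x := by linarith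
  have hinv0 : (0:ℝ) < x⁻¹ := by positivity
  have hinv1 : (1:ℝ) ≤ x⁻¹ := (one_le_inv₀ hx0).2 h2
  have hinv2 : x⁻¹ < 2 := by
    rw [inv_lt_comm₀ hx0 (by norm_num)]; linarith
  have hl0 : (0:ℝ) ≤ Real.logb 2 x⁻¹ := Real.logb_nonneg (by norm_num) hinv1
  have hl1 : Real.logb 2 x⁻¹ < 1 := by
    rw [Real.logb_lt_iff_lt_rpow (by norm_num) hinv0, Real.rpow_one]; exact hinv2
  have hfl : ⌊Real.logb 2 x⁻¹⌋ = 0 := Int.floor_eq_zero_iff.2 ⟨hl0, hl1⟩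
  unfold nIdx; rw [hfl]; rfl

lemma g1_three {u : ℝ} (hu : u ∈ Ioc (2/3 : ℝ) 1) : g1 3 u = 3 * u - 2 := by
  obtain ⟨h1, h2⟩ := hu
  have h2' : (2:ℤ) ≤ ⌊(3:ℝ) * u⌋ := by
    rw [Int.le_floor]; push_cast; linarith
  have hk : min ⌊(3:ℝ) * u⌋ (2:ℤ) = 2 := min_eq_right h2'
  norm_num [g1, hk]

lemma gab_eval {a u : ℝ} (ha : 0 < a) (hu : u ∈ Ioc (2/3 : ℝ) 1) :
    gab a 3 (u ^ a) = (3 * u - 2) ^ a := by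
  have hu0 : (0:ℝ) ≤ u := by linarith [hu.1]
  have h : (u ^ a) ^ a⁻¹ = u := by
    rw [← Real.rpow_mul hu0, mul_inv_cancel₀ ha.ne', Real.rpow_one]
  rw [gab, h, g1_three hu]

lemma xx_mem {a : ℝ} (ha : a ∈ Set.Ioo (0:ℝ) 1) (k : ℕ) : xx a k ∈ Ioc (1/2 : ℝ) 1 := by
  obtain ⟨hu1, hu2⟩ := uu_pos_lt k
  have h1 : uu k ^ a ≤ 1 := Real.rpow_le_one (by linarith) hu2 ha.1.le
  have h2 : 0 < uu k ^ a := Real.rpow_pos_of_pos (by linarith) _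
  constructor <;> unfold xx <;> nlinarith

lemma fa_xx {a : ℝ} (ha : a ∈ Set.Ioo (0:ℝ) 1) (k : ℕ) :
    fa a (xx a k) = (((2:ℝ) ^ (-(k:ℝ))) ^ a + 1) / 2 := by
  obtain ⟨hx1, hx2⟩ := xx_mem ha k
  have hn : nIdx (xx a k) = 1 := nIdx_eq_one ⟨hx1, hx2⟩
  have hxpos : ¬ xx a k ≤ 0 := by push_neg; linarith
  have harg : (2:ℝ) ^ (1:ℕ) * xx a k - 1 = uu k ^ a := by
    unfold xx; ring
  rw [fa, if_neg hxpos, hn, harg]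
  have h3 : 3 * uu k - 2 = (2:ℝ) ^ (-(k:ℝ)) := by unfold uu; ring
  norm_num [gab_eval ha.1 (uu_mem k), h3]

lemma rpow_sub_le {a u v : ℝ} (ha : a ∈ Set.Ioo (0:ℝ) 1) (hv : 2/3 < v) (hvu : v ≤ u)
    (hu1 : u ≤ 1) : u ^ a - v ^ a ≤ (3/2) * (u - v) := by
  have hv0 : (0:ℝ) < v := by linarith
  have hr1 : (1:ℝ) ≤ u / v := (one_le_div hv0).2 hvu
  have hra : (u / v) ^ a ≤ u / v := by
    calc (u/v) ^ a ≤ (u/v) ^ (1:ℝ) := Real.rpow_le_rpow_of_exponent_le hr1 ha.2.le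
    _ = u / v := Real.rpow_one _
  have hra1 : (1:ℝ) ≤ (u / v) ^ a := Real.one_le_rpow hr1 ha.1.le
  have hva : v ^ a ≤ 1 := Real.rpow_le_one hv0.le (by linarith) ha.1.le
  have hva0 : (0:ℝ) < v ^ a := Real.rpow_pos_of_pos hv0 _
  have hsplit : u ^ a = v ^ a * (u / v) ^ a := by
    rw [← Real.mul_rpow hv0.le (by positivity)]
    congr 1; field_simp
  rw [hsplit]
  have h1 : v ^ a * (u/v) ^ a - v ^ a ≤ (u/v) ^ a - 1 := by nlinarith
  have h2 : (u/v) ^ a - 1 ≤ u/v - 1 := by linarith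
  have h3 : u/v - 1 ≤ (3/2) * (u - v) := by
    rw [div_sub_one hv0.ne', div_le_iff₀ hv0]; nlinarith
  linarith

lemma two_rpow_succ (k : ℕ) : (2:ℝ) ^ (-((k:ℝ)+1)) = 2 ^ (-(k:ℝ)) / 2 := by
  rw [show -((k:ℝ)+1) = -(k:ℝ) + (-1) by ring, Real.rpow_add (by norm_num),
    Real.rpow_neg_one]
  ring

lemma xx_strict_anti {a : ℝ} (ha : a ∈ Set.Ioo (0:ℝ) 1) : StrictAnti (xx a) := by
  apply strictAnti_nat_of_succ_lt
  intro k
  have h := uu_anti k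
  have h0 : (0:ℝ) < uu (k+1) := by linarith [(uu_pos_lt (k+1)).1]
  have : uu (k+1) ^ a < uu k ^ a := Real.rpow_lt_rpow h0.le h ha.1
  unfold xx; linarith

lemma xx_diff_le {a : ℝ} (ha : a ∈ Set.Ioo (0:ℝ) 1) (k : ℕ) :
    xx a k - xx a (k+1) ≤ (2:ℝ) ^ (-(k:ℝ)) / 8 := by
  have huu : uu k - uu (k+1) = (2:ℝ) ^ (-(k:ℝ)) / 6 := by
    unfold uu; push_cast; rw [two_rpow_succ]; ring
  have hkey : uu k ^ a - uu (k+1) ^ a ≤ (3/2) * (uu k - uu (k+1)) :=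
    rpow_sub_le ha (uu_pos_lt (k+1)).1 (uu_anti k).le (uu_pos_lt k).2
  unfold xx; rw [huu] at hkey; linarith

lemma fa_diff {a : ℝ} (ha : a ∈ Set.Ioo (0:ℝ) 1) (k : ℕ) :
    fa a (xx a k) - fa a (xx a (k+1)) =
      (2:ℝ) ^ (-(k:ℝ) * a) * ((1 - (2:ℝ) ^ (-a)) / 2) := by
  rw [fa_xx ha k, fa_xx ha (k+1)]
  push_cast
  have e1 : ((2:ℝ) ^ (-(k:ℝ))) ^ a = 2 ^ (-(k:ℝ) * a) :=
    (Real.rpow_mul (by norm_num) _ _).symm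
  have e2 : ((2:ℝ) ^ (-((k:ℝ)+1))) ^ a = 2 ^ (-(k:ℝ) * a) * 2 ^ (-a) := by
    rw [← Real.rpow_mul (by norm_num : (0:ℝ) ≤ 2),
      ← Real.rpow_add (by norm_num : (0:ℝ) < 2)]
    congr 1; ring
  rw [e1, e2]; ring
open scoped ENNReal NNReal

lemma key_real {a p c y : ℝ} (ha0 : 0 < a) (ha1 : a < 1) (hp : (1-a)⁻¹ ≤ p)
    (hc : 0 ≤ c) (hy0 : 0 < y) (hy1 : y ≤ 1) :
    c ^ p ≤ (y ^ a * c * (y/8) ^ (1/p - 1)) ^ p := by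
  have h1a : (0:ℝ) < 1 - a := by linarith
  have hap : 1 ≤ (1-a) * p := by
    calc (1:ℝ) = (1-a) * (1-a)⁻¹ := (mul_inv_cancel₀ h1a.ne').symm
    _ ≤ (1-a) * p := mul_le_mul_of_nonneg_left hp h1a.le
  have hp1 : 1 ≤ p := by nlinarith
  have hp0 : 0 < p := by linarith
  have h8 : (0:ℝ) < y/8 := by positivity
  have e1 : (y ^ a * c * (y/8) ^ (1/p-1)) ^ p
      = (y^a)^p * c^p * ((y/8)^(1/p-1))^p := by
    rw [Real.mul_rpow (by positivity) (by positivity),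
      Real.mul_rpow (by positivity) hc]
  have e2 : ((y:ℝ)^a)^p = y^(a*p) := (Real.rpow_mul hy0.le _ _).symm
  have e3 : ((y/8 : ℝ)^(1/p-1))^p = (y/8)^(1-p) := by
    rw [← Real.rpow_mul h8.le]
    congr 1; field_simp
  have e4a : ((y/8):ℝ)^(1-p) = y^(1-p) / (8:ℝ)^(1-p) :=
    Real.div_rpow hy0.le (by norm_num) _
  have e4b : (8:ℝ)^(1-p) = ((8:ℝ)^(p-1))⁻¹ := by
    rw [← Real.rpow_neg (by norm_num)]; congr 1; ring
  have h6 : 1 ≤ y^(a*p+(1-p)) :=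
    Real.one_le_rpow_of_pos_of_le_one_of_nonpos hy0 hy1 (by nlinarith)
  have h7 : 1 ≤ (8:ℝ)^(p-1) := Real.one_le_rpow (by norm_num) (by linarith)
  have hcp : (0:ℝ) ≤ c^p := Real.rpow_nonneg hc _
  calc c^p = c^p * 1 := (mul_one _).symm
  _ ≤ c^p * (y^(a*p+(1-p)) * (8:ℝ)^(p-1)) := by
      have h67 : (1:ℝ) ≤ y^(a*p+(1-p)) * (8:ℝ)^(p-1) := by nlinarith
      exact mul_le_mul_of_nonneg_left h67 hcp
  _ = (y ^ a * c * (y/8) ^ (1/p-1)) ^ p := by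
      have h7' : (8:ℝ)^(p-1) ≠ 0 := by positivity
      rw [e1, e2, e3, e4a, e4b, Real.rpow_add hy0]
      field_simp

lemma holder_lower {g : ℝ → ℝ} {p d m x₁ x₂ : ℝ} (hp1 : 1 < p)
    (hmeas : AEStronglyMeasurable g (volume.restrict (Set.Ioc x₁ x₂)))
    (hval : ∫ t in Set.Ioc x₁ x₂, g t = d) (hd : 0 < d)
    (hm : 0 < m) (hμ : x₂ - x₁ ≤ m) :
    ENNReal.ofReal ((d * m ^ (1/p - 1)) ^ p)
      ≤ ∫⁻ t in Set.Ioc x₁ x₂, (‖g t‖₊ : ℝ≥0∞) ^ p ∂volume := by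
  have hp0 : 0 < p := by linarith
  set P := ENNReal.ofReal p with hP
  have hP0 : P ≠ 0 := (ENNReal.ofReal_pos.2 hp0).ne'
  have hPtop : P ≠ ⊤ := ENNReal.ofReal_ne_top
  have hP1 : (1:ℝ≥0∞) ≤ P := by
    rw [hP, ← ENNReal.ofReal_one]; exact ENNReal.ofReal_le_ofReal hp1.le
  have hPreal : P.toReal = p := ENNReal.toReal_ofReal hp0.le
  set ρ := volume.restrict (Set.Ioc x₁ x₂) with hρ
  set L : ℝ≥0∞ := ∫⁻ t in Set.Ioc x₁ x₂, (‖g t‖₊ : ℝ≥0∞) ^ p ∂volume with hL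
  set M : ℝ≥0∞ := ENNReal.ofReal m with hM
  have hM0 : M ≠ 0 := (ENNReal.ofReal_pos.2 hm).ne'
  have hMtop : M ≠ ⊤ := ENNReal.ofReal_ne_top
  -- step 1 : ofReal d ≤ eLpNorm g 1 ρ
  have step1 : ENNReal.ofReal d ≤ eLpNorm g 1 ρ := by
    rw [eLpNorm_one_eq_lintegral_enorm, ← Real.enorm_eq_ofReal hd.le, ← hval]
    exact enorm_integral_le_lintegral_enorm _
  -- step 2
  have step2 : eLpNorm g 1 ρ ≤ eLpNorm g P ρ * M ^ (1 - 1/p) := by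
    have h := eLpNorm_le_eLpNorm_mul_rpow_measure_univ (μ := ρ) hP1 hmeas
    have hμuniv : ρ Set.univ ≤ M := by
      rw [hρ, Measure.restrict_apply_univ, Real.volume_Ioc]
      exact ENNReal.ofReal_le_ofReal hμ
    calc eLpNorm g 1 ρ ≤ eLpNorm g P ρ * ρ Set.univ ^ (1/(1:ℝ≥0∞).toReal - 1/P.toReal) := h
    _ ≤ eLpNorm g P ρ * M ^ (1 - 1/p) := by
        rw [ENNReal.toReal_one, hPreal, show 1/(1:ℝ) - 1/p = 1 - 1/p by norm_num]
        have hexp : (0:ℝ) ≤ 1 - 1/p := by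
          have : 1/p < 1 := by rw [div_lt_one hp0]; exact hp1
          linarith
        exact mul_le_mul_right (ENNReal.rpow_le_rpow hμuniv hexp) _
  -- step 3 : eLpNorm = L^(1/p)
  have step3 : eLpNorm g P ρ = L ^ (1/p) := by
    rw [eLpNorm_eq_lintegral_rpow_enorm_toReal hP0 hPtop, hPreal]
    rfl
  have chain : ENNReal.ofReal d ≤ L ^ (1/p) * M ^ (1 - 1/p) :=
    step1.trans (step2.trans_eq (by rw [step3]))
  -- multiply by M ^ (1/p - 1)
  have chain2 : ENNReal.ofReal d * M ^ (1/p - 1) ≤ L ^ (1/p) := by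
    calc ENNReal.ofReal d * M ^ (1/p - 1)
        ≤ L ^ (1/p) * M ^ (1 - 1/p) * M ^ (1/p - 1) := by gcongr
    _ = L ^ (1/p) * (M ^ (1 - 1/p) * M ^ (1/p - 1)) := by ring
    _ = L ^ (1/p) := by
        rw [← ENNReal.rpow_add _ _ hM0 hMtop]
        norm_num
  -- raise to power p
  have chain3 : (ENNReal.ofReal d * M ^ (1/p - 1)) ^ p ≤ L := by
    calc (ENNReal.ofReal d * M ^ (1/p - 1)) ^ p ≤ (L ^ (1/p)) ^ p :=
      ENNReal.rpow_le_rpow chain2 hp0.le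
    _ = L := by
        rw [← ENNReal.rpow_mul, one_div_mul_cancel hp0.ne', ENNReal.rpow_one]
  refine le_trans (le_of_eq ?_) chain3
  rw [hM, ENNReal.ofReal_rpow_of_pos hm, ← ENNReal.ofReal_mul hd.le,
    ENNReal.ofReal_rpow_of_pos (by positivity)]


/-- For every `a ∈ (0,1)` and every `p ≥ 1/(1-a)`, the map `f_a` does not belong to
the Sobolev class `W^{1,p}`. -/
theorem fa_not_sobolev (a : ℝ) (ha : a ∈ Set.Ioo (0 : ℝ) 1)
    (p : ℝ) (hp : (1 - a)⁻¹ ≤ p) :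
    ¬ ∃ g : ℝ → ℝ,
      MemLp g (ENNReal.ofReal p) (volume.restrict (Set.Icc (0 : ℝ) 1)) ∧
      ∀ x ∈ Set.Icc (0 : ℝ) 1, fa a x = ∫ t in (0 : ℝ)..x, g t := by
  rintro ⟨g, hg, hrep⟩
  obtain ⟨ha0, ha1⟩ := ha
  have ha' : a ∈ Set.Ioo (0:ℝ) 1 := ⟨ha0, ha1⟩
  have h1a : (0:ℝ) < 1 - a := by linarith
  have hp1 : 1 < p := by
    have : 1 < (1-a)⁻¹ := by
      rw [lt_inv_comm₀ one_pos h1a]; simpa using ha0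
    linarith
  have hp0 : 0 < p := by linarith
  set P := ENNReal.ofReal p with hP
  have hP0 : P ≠ 0 := (ENNReal.ofReal_pos.2 hp0).ne'
  have hPtop : P ≠ ⊤ := ENNReal.ofReal_ne_top
  have hP1 : (1:ℝ≥0∞) ≤ P := by
    rw [hP, ← ENNReal.ofReal_one]; exact ENNReal.ofReal_le_ofReal hp1.le
  have hPreal : P.toReal = p := ENNReal.toReal_ofReal hp0.le
  haveI : IsFiniteMeasure (volume.restrict (Icc (0:ℝ) 1)) :=
    ⟨by rw [Measure.restrict_apply_univ]; simp [Real.volume_Icc]⟩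
  -- the constant c
  set c : ℝ := (1 - (2:ℝ)^(-a))/2 with hc_def
  have hc : 0 < c := by
    have : (2:ℝ)^(-a) < 1 :=
      Real.rpow_lt_one_of_one_lt_of_neg (by norm_num) (by linarith)
    rw [hc_def]; linarith
  -- memberships and integrability
  have hxmem : ∀ k : ℕ, xx a k ∈ Icc (0:ℝ) 1 := fun k =>
    ⟨by linarith [(xx_mem ha' k).1], (xx_mem ha' k).2⟩
  have hInt : IntegrableOn g (Icc 0 1) volume := hg.integrable hP1
  have hII : ∀ k : ℕ, IntervalIntegrable g volume 0 (xx a k) := by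
    intro k
    apply IntegrableOn.intervalIntegrable
    apply hInt.mono_set
    rw [Set.uIcc_of_le (hxmem k).1]
    exact Icc_subset_Icc le_rfl (hxmem k).2
  have hanti := xx_strict_anti ha'
  have hJsub : ∀ k : ℕ, Ioc (xx a (k+1)) (xx a k) ⊆ Icc (0:ℝ) 1 := fun k t ht =>
    ⟨(hxmem (k+1)).1.trans ht.1.le, ht.2.trans (hxmem k).2⟩
  have hdiffInt : ∀ k : ℕ,
      (∫ t in Ioc (xx a (k+1)) (xx a k), g t) = fa a (xx a k) - fa a (xx a (k+1)) := by
    intro k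
    rw [hrep _ (hxmem k), hrep _ (hxmem (k+1)),
      intervalIntegral.integral_interval_sub_left (hII k) (hII (k+1)),
      intervalIntegral.integral_of_le (hanti (Nat.lt_succ_self k)).le]
  -- per-interval lower bound
  set C0 : ℝ≥0∞ := ENNReal.ofReal (c^p) with hC0
  have hC0pos : C0 ≠ 0 := by
    rw [hC0]; exact (ENNReal.ofReal_pos.2 (Real.rpow_pos_of_pos hc _)).ne'
  have hC0top : C0 ≠ ⊤ := ENNReal.ofReal_ne_top
  have hSk : ∀ k : ℕ, C0 ≤
      ∫⁻ t in Ioc (xx a (k+1)) (xx a k), (‖g t‖₊ : ℝ≥0∞) ^ p ∂volume := by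
    intro k
    set y : ℝ := (2:ℝ)^(-(k:ℝ)) with hy
    have hy0 : 0 < y := Real.rpow_pos_of_pos (by norm_num) _
    have hy1 : y ≤ 1 := Real.rpow_le_one_of_one_le_of_nonpos (by norm_num) (by simp)
    have hd : (0:ℝ) < y ^ a * c := by positivity
    have hΔf : (∫ t in Ioc (xx a (k+1)) (xx a k), g t) = y ^ a * c := by
      rw [hdiffInt k, fa_diff ha' k, ← hc_def, hy, ← Real.rpow_mul (by norm_num)]
    have hmeas : AEStronglyMeasurable g
        (volume.restrict (Ioc (xx a (k+1)) (xx a k))) := by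
      rw [← Measure.restrict_restrict_of_subset (hJsub k)]
      exact hg.1.restrict
    refine le_trans ?_
      (holder_lower hp1 hmeas hΔf hd (by positivity) (xx_diff_le ha' k))
    rw [hC0]
    exact ENNReal.ofReal_le_ofReal (key_real ha0 ha1 hp hc.le hy0 hy1)
  -- the total integral is finite
  set T : ℝ≥0∞ := ∫⁻ t in Icc (0:ℝ) 1, (‖g t‖₊ : ℝ≥0∞) ^ p ∂volume with hT_def
  have hTtop : T ≠ ⊤ := by
    have h2 := hg.2
    rw [eLpNorm_eq_lintegral_rpow_enorm_toReal hP0 hPtop, hPreal] at h2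
    change (∫⁻ t in Icc (0:ℝ) 1, (‖g t‖₊ : ℝ≥0∞) ^ p) ^ (1/p) < ⊤ at h2
    intro hcon
    rw [hT_def] at hcon
    rw [hcon, ENNReal.top_rpow_of_pos (by positivity)] at h2
    exact (lt_irrefl _ h2).elim
  -- summing the lower bounds
  have hsum : ∀ N : ℕ, (N : ℝ≥0∞) * C0 ≤ T := by
    intro N
    have hdisj : (↑(Finset.range N) : Set ℕ).PairwiseDisjoint
        (fun k => Ioc (xx a (k+1)) (xx a k)) := by
      have key : ∀ i j : ℕ, i < j →
          Disjoint (Ioc (xx a (i+1)) (xx a i)) (Ioc (xx a (j+1)) (xx a j)) := by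
        intro i j hij
        rw [Set.Ioc_disjoint_Ioc]
        calc min (xx a i) (xx a j) ≤ xx a j := min_le_right _ _
        _ ≤ xx a (i+1) := hanti.antitone hij
        _ ≤ max (xx a (i+1)) (xx a (j+1)) := le_max_left _ _
      intro i _ j _ hij
      rcases lt_or_gt_of_ne hij with h | h
      · exact key i j h
      · exact (key j i h).symm
    calc (N:ℝ≥0∞) * C0 = ∑ _k ∈ Finset.range N, C0 := by
          simp [Finset.sum_const, nsmul_eq_mul]
    _ ≤ ∑ k ∈ Finset.range N,
          ∫⁻ t in Ioc (xx a (k+1)) (xx a k), (‖g t‖₊ : ℝ≥0∞) ^ p ∂volume :=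
        Finset.sum_le_sum fun k _ => hSk k
    _ = ∫⁻ t in ⋃ k ∈ Finset.range N, Ioc (xx a (k+1)) (xx a k),
          (‖g t‖₊ : ℝ≥0∞) ^ p ∂volume :=
        (lintegral_biUnion_finset hdisj (fun k _ => measurableSet_Ioc) _).symm
    _ ≤ T := lintegral_mono_set (Set.iUnion₂_subset fun k _ => hJsub k)
  -- contradiction
  obtain ⟨N, hN⟩ := ENNReal.exists_nat_gt (ENNReal.div_lt_top hTtop hC0pos).ne
  have hlt : T < (N:ℝ≥0∞) * C0 :=
    (ENNReal.div_lt_iff (Or.inl hC0pos) (Or.inl hC0top)).1 hN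
  exact absurd (hsum N) (not_le.2 hlt)
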